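/- arXiv:1906.12278 — 3 statements merged into one kernel-verified Lean document; each statement's English description precedes it below -/
import Mathlib

section
/- Let $k \ge 1$, and let $\rho_1, \dots, \rho_k > 0$ with $\sum_{j=1}^k \rho_j < 1$. Define $f(\rho) = \sum_{i=1}^k \frac{1}{(1 - \sum_{j=1}^i \rho_j)(1 - \sum_{j=1}^{i-1} \rho_j)}$. If $\sigma$ is any permutation of $\{1,\dots,k\}$ and $\rho_1 \le \rho_2 \le \dots \le \rho_k$, then $f(\rho_1,\dots,\rho_k) \le f(\rho_{\sigma(1)},\dots,\rho_{\sigma(k)})$. -/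
/-!
Exchanging two adjacent classes changes only their two terms of the sum, and putting the larger
traffic intensity first costs at least as much: with remaining capacity `c`, the difference is
`(x - y) (1/c + 1/(c - x - y)) / ((c - x)(c - y)) ≥ 0`. Hence insertion sort, which only ever moves
a smaller entry in front of a larger one, never increases the sum, and the increasing order is the
output of insertion sort on every rearrangement.
-/

open Finset

/-- `paoiSum c [x₁, …, xₙ] = ∑ᵢ 1 / ((c - x₁ - … - xᵢ) * (c - x₁ - … - xᵢ₋₁))`. -/
noncomputable def paoiSum (c : ℝ) : List ℝ → ℝ
  | [] => 0
  | x :: l => 1 / ((c - x) * c) + paoiSum (c - x) l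

theorem paoiSum_swap_le {c x y : ℝ} (l : List ℝ) (hy : 0 ≤ y) (hyx : y ≤ x) (hc : x + y < c) :
    paoiSum c (y :: x :: l) ≤ paoiSum c (x :: y :: l) := by
  have hcx : 0 < c - x := by linarith
  have hcy : 0 < c - y := by linarith
  have hcxy : 0 < c - x - y := by linarith
  have hc : 0 < c := by linarith
  have key : (1 / ((c - x) * c) + 1 / ((c - x - y) * (c - x)))
      - (1 / ((c - y) * c) + 1 / ((c - x - y) * (c - y)))
      = (x - y) * (1 / c + 1 / (c - x - y)) / ((c - x) * (c - y)) := by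
    field_simp
    ring
  have hnonneg : 0 ≤ (x - y) * (1 / c + 1 / (c - x - y)) / ((c - x) * (c - y)) := by
    have : 0 ≤ x - y := by linarith
    positivity
  simp only [paoiSum, show c - y - x = c - x - y by ring]
  linarith

theorem paoiSum_orderedInsert_le {c x : ℝ} {l : List ℝ} (hl : ∀ a ∈ l, 0 ≤ a)
    (hsum : x + l.sum < c) : paoiSum c (l.orderedInsert (· ≤ ·) x) ≤ paoiSum c (x :: l) := by
  induction l generalizing c with
  | nil => rfl
  | cons a l ih =>
    have ha : 0 ≤ a := hl a List.mem_cons_self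
    have hl' : ∀ b ∈ l, 0 ≤ b := fun b hb => hl b (List.mem_cons_of_mem a hb)
    have hlsum : 0 ≤ l.sum := List.sum_nonneg hl'
    rw [List.sum_cons] at hsum
    rw [List.orderedInsert_cons]
    split_ifs with hxa
    · rfl
    · calc paoiSum c (a :: l.orderedInsert (· ≤ ·) x)
          = 1 / ((c - a) * c) + paoiSum (c - a) (l.orderedInsert (· ≤ ·) x) := rfl
        _ ≤ 1 / ((c - a) * c) + paoiSum (c - a) (x :: l) := by
          gcongr
          exact ih hl' (by linarith)
        _ = paoiSum c (a :: x :: l) := rfl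
        _ ≤ paoiSum c (x :: a :: l) := paoiSum_swap_le l ha (le_of_not_ge hxa) (by linarith)

theorem paoiSum_insertionSort_le {c : ℝ} {l : List ℝ} (hl : ∀ a ∈ l, 0 ≤ a) (hsum : l.sum < c) :
    paoiSum c (l.insertionSort (· ≤ ·)) ≤ paoiSum c l := by
  induction l generalizing c with
  | nil => rfl
  | cons x l ih =>
    have hl' : ∀ b ∈ l, 0 ≤ b := fun b hb => hl b (List.mem_cons_of_mem x hb)
    have hperm := List.perm_insertionSort (· ≤ ·) l
    rw [List.sum_cons] at hsum
    calc paoiSum c ((x :: l).insertionSort (· ≤ ·))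
        = paoiSum c ((l.insertionSort (· ≤ ·)).orderedInsert (· ≤ ·) x) := rfl
      _ ≤ paoiSum c (x :: l.insertionSort (· ≤ ·)) :=
        paoiSum_orderedInsert_le (fun b hb => hl' b (hperm.subset hb)) (by rwa [hperm.sum_eq])
      _ = 1 / ((c - x) * c) + paoiSum (c - x) (l.insertionSort (· ≤ ·)) := rfl
      _ ≤ 1 / ((c - x) * c) + paoiSum (c - x) l := by
        gcongr
        exact ih hl' (by linarith)
      _ = paoiSum c (x :: l) := rfl

theorem paoiSum_le_of_perm_of_sortedLE {c : ℝ} {l₁ l₂ : List ℝ} (hperm : l₁.Perm l₂)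
    (hsorted : l₁.SortedLE) (hl₂ : ∀ a ∈ l₂, 0 ≤ a) (hsum : l₂.sum < c) :
    paoiSum c l₁ ≤ paoiSum c l₂ := by
  have : l₂.insertionSort (· ≤ ·) = l₁ :=
    ((List.perm_insertionSort _ l₂).trans hperm.symm).eq_of_sortedLE
      List.sortedLE_insertionSort hsorted
  exact this ▸ paoiSum_insertionSort_le hl₂ hsum

theorem paoiSum_eq_sum_range (c : ℝ) (l : List ℝ) :
    paoiSum c l = ∑ i ∈ range l.length,
      1 / ((c - (l.take (i + 1)).sum) * (c - (l.take i).sum)) := by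
  induction l generalizing c with
  | nil => rfl
  | cons x l ih =>
    rw [List.length_cons, sum_range_succ', paoiSum, ih, add_comm]
    simp only [List.take_succ_cons, List.sum_cons, List.take_zero, List.sum_nil, sub_sub, add_zero, sub_zero]

theorem paoiSum_ofFn (c : ℝ) {k : ℕ} (a : Fin k → ℝ) :
    paoiSum c (List.ofFn a)
      = ∑ i : Fin k, 1 / ((c - ∑ j ∈ Iic i, a j) * (c - ∑ j ∈ Iio i, a j)) := by
  rw [paoiSum_eq_sum_range, List.length_ofFn, ← Fin.sum_univ_eq_sum_range]
  refine sum_congr rfl fun i _ => ?_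
  rw [List.sum_take_ofFn, List.sum_take_ofFn]
  congr 4 <;> ext j <;> simp

theorem stmt_10_general (k : ℕ) (ρ : Fin k → ℝ)
    (hpos : ∀ i, 0 < ρ i) (hsum : ∑ i, ρ i < 1) (hmono : Monotone ρ)
    (σ : Equiv.Perm (Fin k)) :
    ∑ i : Fin k, 1 / ((1 - ∑ j ∈ Finset.Iic i, ρ j) * (1 - ∑ j ∈ Finset.Iio i, ρ j))
      ≤ ∑ i : Fin k, 1 / ((1 - ∑ j ∈ Finset.Iic i, ρ (σ j)) *
          (1 - ∑ j ∈ Finset.Iio i, ρ (σ j))) := by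
  rw [← paoiSum_ofFn, ← paoiSum_ofFn (a := fun j => ρ (σ j))]
  refine paoiSum_le_of_perm_of_sortedLE (σ.ofFn_comp_perm ρ).symm
    (List.sortedLE_ofFn_iff.mpr hmono) ?_ ?_
  · simp only [List.mem_ofFn, forall_exists_index]
    rintro _ j rfl
    exact (hpos _).le
  · rwa [List.sum_ofFn, Equiv.sum_comp σ ρ]

theorem stmt_10 (k : ℕ) (hk : 1 ≤ k) (ρ : Fin k → ℝ)
    (hpos : ∀ i, 0 < ρ i) (hsum : ∑ i, ρ i < 1) (hmono : Monotone ρ)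
    (σ : Equiv.Perm (Fin k)) :
    ∑ i : Fin k, 1 / ((1 - ∑ j ∈ Finset.Iic i, ρ j) * (1 - ∑ j ∈ Finset.Iio i, ρ j))
      ≤ ∑ i : Fin k, 1 / ((1 - ∑ j ∈ Finset.Iic i, ρ (σ j)) *
          (1 - ∑ j ∈ Finset.Iio i, ρ (σ j))) :=
  stmt_10_general k ρ hpos hsum hmono σ
end

section
/- Fix $i$ with $1 \le i \le k$ and interchange adjacent intensities: if $\rho_i \ge \rho_{i+1}$ and all $\rho_j > 0$ with $\sum_{j=1}^k \rho_j < 1$, then swapping $\rho_i$ and $\rho_{i+1}$ does not increase $\sum_{l=1}^k \frac{1}{(1-\sum_{j=1}^l \rho_j)(1-\sum_{j=1}^{l-1}\rho_j)}$; i.e., the swapped sequence gives a value less than or equal to the original. -/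
theorem stmt_12 (k : ℕ) (ρ : Fin k → ℝ)
    (hpos : ∀ i, 0 < ρ i) (hsum : ∑ i, ρ i < 1)
    (i j : Fin k) (hadj : (i : ℕ) + 1 = (j : ℕ)) (hge : ρ j ≤ ρ i) :
    ∑ l : Fin k, 1 / ((1 - ∑ m ∈ Finset.Iic l, ρ (Equiv.swap i j m)) *
        (1 - ∑ m ∈ Finset.Iio l, ρ (Equiv.swap i j m)))
      ≤ ∑ l : Fin k, 1 / ((1 - ∑ m ∈ Finset.Iic l, ρ m) *
          (1 - ∑ m ∈ Finset.Iio l, ρ m)) := by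
  have hij : i ≠ j := by
    intro h
    rw [h] at hadj
    omega
  have hswap : ∀ s : Finset (Fin k), (i ∈ s ↔ j ∈ s) →
      ∑ m ∈ s, ρ (Equiv.swap i j m) = ∑ m ∈ s, ρ m := by
    intro s hs
    refine Finset.sum_equiv (Equiv.swap i j) (fun m => ?_) (fun m _ => rfl)
    rcases eq_or_ne m i with rfl | hmi
    · simpa [Equiv.swap_apply_left] using hs
    rcases eq_or_ne m j with rfl | hmj
    · simpa [Equiv.swap_apply_right] using hs.symm
    · simp [Equiv.swap_apply_of_ne_of_ne hmi hmj]
  have hpart : ∀ s : Finset (Fin k), ∑ m ∈ s, ρ m < 1 :=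
    fun s => lt_of_le_of_lt (Finset.sum_le_sum_of_subset_of_nonneg
      (Finset.subset_univ s) (fun m _ _ => (hpos m).le)) hsum
  have hIioj : Finset.Iio j = Finset.Iic i := by
    ext m
    simp only [Finset.mem_Iio, Finset.mem_Iic, Fin.lt_def, Fin.le_def]
    omega
  have hIici : Finset.Iic i = insert i (Finset.Iio i) := (Finset.Iio_insert i).symm
  have hIicj : Finset.Iic j = insert j (Finset.Iic i) := by
    rw [← hIioj]; exact (Finset.Iio_insert j).symm
  have hg_eq : ∀ l : Fin k, l ≠ i → l ≠ j →
      (1 / ((1 - ∑ m ∈ Finset.Iic l, ρ (Equiv.swap i j m)) *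
        (1 - ∑ m ∈ Finset.Iio l, ρ (Equiv.swap i j m)))) =
      1 / ((1 - ∑ m ∈ Finset.Iic l, ρ m) * (1 - ∑ m ∈ Finset.Iio l, ρ m)) := by
    intro l hli hlj
    have hli' : (l : ℕ) ≠ (i : ℕ) := fun h => hli (Fin.ext h)
    have hlj' : (l : ℕ) ≠ (j : ℕ) := fun h => hlj (Fin.ext h)
    have h1 : i ∈ Finset.Iic l ↔ j ∈ Finset.Iic l := by
      simp only [Finset.mem_Iic, Fin.le_def]
      omega
    have h2 : i ∈ Finset.Iio l ↔ j ∈ Finset.Iio l := by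
      simp only [Finset.mem_Iio, Fin.lt_def]
      omega
    rw [hswap _ h1, hswap _ h2]
  set A := ∑ m ∈ Finset.Iio i, ρ m with hA
  have hIio_i_pres : i ∈ Finset.Iio i ↔ j ∈ Finset.Iio i := by
    simp only [Finset.mem_Iio, Fin.lt_def]
    omega
  have hIic_j_pres : i ∈ Finset.Iic j ↔ j ∈ Finset.Iic j := by
    simp only [Finset.mem_Iic, Fin.le_def]
    omega
  have hnotmem : i ∉ Finset.Iio i := by simp
  have hnotmem' : j ∉ Finset.Iic i := by
    simp only [Finset.mem_Iic, Fin.le_def]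
    omega
  -- the four relevant partial sums
  have sum_Iic_i : ∑ m ∈ Finset.Iic i, ρ m = A + ρ i := by
    rw [hIici, Finset.sum_insert hnotmem]; ring
  have sum_Iic_i_sw : ∑ m ∈ Finset.Iic i, ρ (Equiv.swap i j m) = A + ρ j := by
    rw [hIici, Finset.sum_insert hnotmem, Equiv.swap_apply_left, hswap _ hIio_i_pres]; ring
  have sum_Iio_i_sw : ∑ m ∈ Finset.Iio i, ρ (Equiv.swap i j m) = A :=
    hswap _ hIio_i_pres
  have sum_Iic_j : ∑ m ∈ Finset.Iic j, ρ m = A + ρ i + ρ j := by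
    rw [hIicj, Finset.sum_insert hnotmem', sum_Iic_i]; ring
  have sum_Iic_j_sw : ∑ m ∈ Finset.Iic j, ρ (Equiv.swap i j m) = A + ρ i + ρ j := by
    rw [hswap _ hIic_j_pres, sum_Iic_j]
  have sum_Iio_j : ∑ m ∈ Finset.Iio j, ρ m = A + ρ i := by
    rw [hIioj, sum_Iic_i]
  have sum_Iio_j_sw : ∑ m ∈ Finset.Iio j, ρ (Equiv.swap i j m) = A + ρ j := by
    rw [hIioj, sum_Iic_i_sw]
  -- positivity
  have hb : 0 < 1 - (A + ρ i + ρ j) := by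
    have := hpart (Finset.Iic j); rw [sum_Iic_j] at this; linarith
  have hx : 0 < 1 - (A + ρ i) := by linarith [hpos j]
  have hy : 0 < 1 - (A + ρ j) := by linarith [hpos i]
  have ha : 0 < 1 - A := by linarith [hpos i, hpos j]
  -- split the sums
  rw [← Finset.sum_sdiff (Finset.subset_univ ({i, j} : Finset (Fin k))),
      ← Finset.sum_sdiff (Finset.subset_univ ({i, j} : Finset (Fin k)))]
  have hkey :
      ∑ l ∈ ({i, j} : Finset (Fin k)), 1 / ((1 - ∑ m ∈ Finset.Iic l, ρ (Equiv.swap i j m)) *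
        (1 - ∑ m ∈ Finset.Iio l, ρ (Equiv.swap i j m)))
      ≤ ∑ l ∈ ({i, j} : Finset (Fin k)), 1 / ((1 - ∑ m ∈ Finset.Iic l, ρ m) *
        (1 - ∑ m ∈ Finset.Iio l, ρ m)) := by
    rw [Finset.sum_pair hij, Finset.sum_pair hij,
        sum_Iic_i, sum_Iic_i_sw, sum_Iio_i_sw, sum_Iic_j, sum_Iic_j_sw,
        sum_Iio_j, sum_Iio_j_sw]
    have h1 : 1 / ((1 - (A + ρ j)) * (1 - A)) ≤ 1 / ((1 - (A + ρ i)) * (1 - A)) := by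
      gcongr
    have h2 : 1 / ((1 - (A + ρ i + ρ j)) * (1 - (A + ρ j)))
        ≤ 1 / ((1 - (A + ρ i + ρ j)) * (1 - (A + ρ i))) := by
      gcongr
    linarith
  refine add_le_add (le_of_eq (Finset.sum_congr rfl fun l hl => ?_)) hkey
  rw [Finset.mem_sdiff, Finset.mem_insert, Finset.mem_singleton] at hl
  push_neg at hl
  exact hg_eq l hl.2.1 hl.2.2
end

section
/- Let $\psi(s)$ be the Laplace transform of a probability distribution on $[0,\infty)$ with positive mean, and let $\lambda_1, \lambda_2 > 0$. Define $\pi_1(0) = \psi(\lambda_1)$ and $b_0 = \psi(\lambda_1)$, $a_0 = \psi(\lambda_1+\lambda_2)$, $a_1 = \psi(\lambda_1) - \psi(\lambda_1+\lambda_2)$. Then the stationary distribution $\pi_2 = (\pi_2(0,0), \pi_2(0,1), \pi_2(1,0), \pi_2(1,1))$ of the Markov chain with transition matrix having rows $(a_0, a_1, a_2, a_3)$ for states $(0,0),(0,1),(1,0)$ and $(0, b_0, 0, 1-b_0)$ for state $(1,1)$ (where $a_2 = \psi(\lambda_2) - \psi(\lambda_1+\lambda_2)$ and $a_3 = 1 -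 a_0 - a_1 - a_2$) satisfies $\pi_2(0,0) = \frac{\psi(\lambda_1+\lambda_2)\,\psi(\lambda_1)}{1 - \psi(\lambda_2) + \psi(\lambda_1+\lambda_2)}$, assuming $b_0 \in (0,1)$ and $a_0, a_1, a_2, a_3 \ge 0$. -/
open MeasureTheory

theorem stmt_14 (μ : Measure ℝ) [IsProbabilityMeasure μ] (hnonneg : μ (Set.Iio 0) = 0)
    (hmean : 0 < ∫ x, x ∂μ)
    (ψ : ℝ → ℝ) (hψ : ∀ s, ψ s = ∫ x, Real.exp (-s * x) ∂μ)
    (lam1 lam2 : ℝ) (hl1 : 0 < lam1) (hl2 : 0 < lam2)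
    (a0 a1 a2 a3 b0 : ℝ)
    (ha0 : a0 = ψ (lam1 + lam2)) (ha1 : a1 = ψ lam1 - ψ (lam1 + lam2))
    (ha2 : a2 = ψ lam2 - ψ (lam1 + lam2)) (ha3 : a3 = 1 - a0 - a1 - a2)
    (hb0 : b0 = ψ lam1)
    (hb0mem : b0 ∈ Set.Ioo (0 : ℝ) 1)
    (ha0nn : 0 ≤ a0) (ha1nn : 0 ≤ a1) (ha2nn : 0 ≤ a2) (ha3nn : 0 ≤ a3)
    (p00 p01 p10 p11 : ℝ)
    (hsum : p00 + p01 + p10 + p11 = 1)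
    (hst00 : p00 = (p00 + p01 + p10) * a0)
    (hst01 : p01 = (p00 + p01 + p10) * a1 + p11 * b0)
    (hst10 : p10 = (p00 + p01 + p10) * a2)
    (hst11 : p11 = (p00 + p01 + p10) * a3 + p11 * (1 - b0)) :
    p00 = ψ (lam1 + lam2) * ψ lam1 / (1 - ψ lam2 + ψ (lam1 + lam2)) := by
  have hD : 1 - ψ lam2 + ψ (lam1 + lam2) = a3 + b0 := by
    rw [ha3, ha0, ha1, ha2, hb0]; ring
  have hpos : 0 < a3 + b0 := add_pos_of_nonneg_of_pos ha3nn hb0mem.1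
  rw [hD, ← ha0, ← hb0, eq_div_iff (ne_of_gt hpos)]
  linear_combination (a3 + b0) * hst00 - a0 * hst11 + a0 * b0 * hsum
end
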